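/- Jones' compatibility conditions are stable under reiteration: let (𝒜_I : I ∈ 𝒟^N) satisfy (J1)–(J4) with constant κ_J, with A_I = ⋃𝒜_I, and let 𝒩 = {A_I : I ∈ 𝒟^N}. Suppose (ℬ_J : J ∈ 𝒟ⁿ) with ℬ_J ⊆ 𝒩 also satisfies (J1)–(J4) with constant κ_J. Define 𝒞_J = ⋃_{A_I ∈ ℬ_J} 𝒜_I. Then (𝒞_J : J ∈ 𝒟ⁿ) satisfies (J1)–(J4) with constant κ_J². -/

import Mathlib

open MeasureTheory

/-- The dyadic interval `[j/2^k, (j+1)/2^k)`. -/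
noncomputable def dyadicSet (k j : ℕ) : Set ℝ :=
  Set.Ico ((j : ℝ) / 2 ^ k) (((j : ℝ) + 1) / 2 ^ k)

/-- Real-valued measure. -/
noncomputable def msr (s : Set ℝ) : ℝ := (volume s).toReal

/-- Jones' compatibility conditions (J1)–(J4) with constant `κ` for a family
`(ℬ_I : I ∈ 𝒟ⁿ)` of collections `ℬ k j ⊆ 𝒩` indexed by the dyadic intervals of level `≤ n`.
(J1): `𝒩` consists of measurable sets of finite positive measure and is nested, and each
`ℬ k j` is finite;  (J2): each `ℬ k j` is nonempty and consists of pairwise disjoint sets,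
and distinct indices give disjoint collections;  (J3): `B_{I₀} ∩ B_{I₁} = ∅` if
`I₀ ∩ I₁ = ∅` and `B_{I₀} ⊆ B_{I₁}` if `I₀ ⊆ I₁`, where `B_I = ⋃ℬ_I`;  (J4): for
`I₀ ⊆ I` and `N ∈ ℬ_I`, `|N ∩ B_{I₀}|/|N| ≥ κ⁻¹ |B_{I₀}|/|B_I|`. -/
def JonesConds (n : ℕ) (𝒩 : Set (Set ℝ)) (ℬ : ℕ → ℕ → Set (Set ℝ)) (κ : ℝ) : Prop :=
  -- (J1)
  ((∀ N ∈ 𝒩, MeasurableSet N ∧ 0 < volume N ∧ volume N < ⊤) ∧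
   (∀ N ∈ 𝒩, ∀ M ∈ 𝒩, (N ∩ M).Nonempty → N ⊆ M ∨ M ⊆ N) ∧
   (∀ k j, k ≤ n → j < 2 ^ k → (ℬ k j).Finite ∧ ℬ k j ⊆ 𝒩)) ∧
  -- (J2)
  ((∀ k j, k ≤ n → j < 2 ^ k → (ℬ k j).Nonempty ∧
      ∀ N ∈ ℬ k j, ∀ M ∈ ℬ k j, N ≠ M → N ∩ M = ∅) ∧
   (∀ k j k' j', k ≤ n → j < 2 ^ k → k' ≤ n → j' < 2 ^ k' → (k, j) ≠ (k', j') →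
      ℬ k j ∩ ℬ k' j' = ∅)) ∧
  -- (J3)
  ((∀ k j k' j', k ≤ n → j < 2 ^ k → k' ≤ n → j' < 2 ^ k' →
      dyadicSet k j ∩ dyadicSet k' j' = ∅ → (⋃₀ ℬ k j) ∩ (⋃₀ ℬ k' j') = ∅) ∧
   (∀ k j k' j', k ≤ n → j < 2 ^ k → k' ≤ n → j' < 2 ^ k' →
      dyadicSet k j ⊆ dyadicSet k' j' → ⋃₀ ℬ k j ⊆ ⋃₀ ℬ k' j')) ∧
  -- (J4)
  (∀ k j k' j', k ≤ n → j < 2 ^ k → k' ≤ n → j' < 2 ^ k' →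
      dyadicSet k j ⊆ dyadicSet k' j' → ∀ N ∈ ℬ k' j',
        msr (N ∩ ⋃₀ ℬ k j) / msr N ≥ κ⁻¹ * msr (⋃₀ ℬ k j) / msr (⋃₀ ℬ k' j'))

/-!
A set `A_I` of `𝒩` determines `I`: if `A_I ⊆ A_{I'}` then `I ⊆ I'`. Otherwise `I'` lies strictly
inside `I`, and another dyadic interval `I''` of the level of `I'` inside `I` has a nonempty
`A_{I''}` that is contained in `A_I ⊆ A_{I'}` and yet disjoint from `A_{I'}`. This gives (J2), and
(J3) is inherited because `⋃𝒞_J = ⋃ℬ_J`.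

For (J4), fix `M ∈ 𝒜_I` with `A_I ∈ ℬ_{J'}` and `J ⊆ J'`. Either `A_I` lies inside a single member
of `ℬ_J`, and then `M ⊆ C_J`; or, by nestedness, the members of `ℬ_J` meeting `A_I` are sets
`A_{I₀} ⊆ A_I`, hence `I₀ ⊆ I`, and summing (J4) for `𝒜` over them gives
`|M ∩ C_J| / |M| ≥ κ⁻¹ |A_I ∩ C_J| / |A_I|`. In both cases (J4) for `ℬ` then costs another `κ`.
-/

open Set
open scoped ENNReal

theorem mem_dyadicSet_iff {k j : ℕ} {x : ℝ} :
    x ∈ dyadicSet k j ↔ 0 ≤ x ∧ ⌊x * 2 ^ k⌋₊ = j := by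
  have hpow : (0 : ℝ) < 2 ^ k := by positivity
  simp only [dyadicSet, mem_Ico, div_le_iff₀ hpow, lt_div_iff₀ hpow]
  constructor
  · intro hx
    have hx₀ : 0 ≤ x * 2 ^ k := j.cast_nonneg.trans hx.1
    exact ⟨(mul_nonneg_iff_of_pos_right hpow).1 hx₀, (Nat.floor_eq_iff hx₀).2 hx⟩
  · rintro ⟨hx, rfl⟩
    exact (Nat.floor_eq_iff (by positivity)).1 rfl

theorem left_mem_dyadicSet (k j : ℕ) : (j : ℝ) / 2 ^ k ∈ dyadicSet k j :=
  left_mem_Ico.2 (div_lt_div_of_pos_right (lt_add_one _) (by positivity))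

theorem eq_of_mem_dyadicSet {k j j' : ℕ} {x : ℝ} (hx : x ∈ dyadicSet k j)
    (hx' : x ∈ dyadicSet k j') : j = j' :=
  (mem_dyadicSet_iff.1 hx).2.symm.trans (mem_dyadicSet_iff.1 hx').2

theorem dyadicSet_subset_dyadicSet_div {k k' : ℕ} (hk : k ≤ k') (j : ℕ) :
    dyadicSet k' j ⊆ dyadicSet k (j / 2 ^ (k' - k)) := by
  intro x hx
  obtain ⟨hx₀, hj⟩ := mem_dyadicSet_iff.1 hx
  refine mem_dyadicSet_iff.2 ⟨hx₀, ?_⟩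
  have hscale : x * 2 ^ k = x * 2 ^ k' / ((2 ^ (k' - k) : ℕ) : ℝ) := by
    rw [Nat.cast_pow, Nat.cast_ofNat, ← pow_sub_mul_pow (2 : ℝ) hk]
    field_simp
  rw [hscale, Nat.floor_div_natCast, hj]

theorem dyadicSet_subset_of_inter_nonempty {k k' j j' : ℕ} (hk : k ≤ k')
    (h : (dyadicSet k j ∩ dyadicSet k' j').Nonempty) : dyadicSet k' j' ⊆ dyadicSet k j := by
  obtain ⟨x, hx, hx'⟩ := h
  obtain rfl := eq_of_mem_dyadicSet hx (dyadicSet_subset_dyadicSet_div hk j' hx')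
  exact dyadicSet_subset_dyadicSet_div hk j'

theorem exists_ne_dyadicSet_subset {k k' j : ℕ} (hk : k < k') (hj : j < 2 ^ k) (j' : ℕ) :
    ∃ j'' < 2 ^ k', j'' ≠ j' ∧ dyadicSet k' j'' ⊆ dyadicSet k j := by
  set m := k' - k
  have hm : 1 < 2 ^ m := Nat.one_lt_two_pow (by omega)
  obtain ⟨r, hr, hne⟩ : ∃ r < 2 ^ m, 2 ^ m * j + r ≠ j' :=
    if h : 2 ^ m * j = j' then ⟨1, hm, by omega⟩ else ⟨0, by omega, h⟩
  refine ⟨2 ^ m * j + r, ?_, hne, ?_⟩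
  · calc 2 ^ m * j + r < 2 ^ m * (j + 1) := by rw [mul_add_one]; omega
      _ ≤ 2 ^ m * 2 ^ k := Nat.mul_le_mul_left _ hj
      _ = 2 ^ k' := pow_sub_mul_pow 2 hk.le
  · have hsub := dyadicSet_subset_dyadicSet_div hk.le (2 ^ m * j + r)
    rwa [Nat.mul_add_div (by positivity), Nat.div_eq_of_lt hr, add_zero] at hsub

theorem mul_measureReal_sUnion_le {α : Type*} [MeasurableSpace α] {μ : Measure α}
    {𝒮 : Set (Set α)} (h𝒮 : 𝒮.Finite) (hd : 𝒮.PairwiseDisjoint id)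
    (hm : ∀ B ∈ 𝒮, MeasurableSet B) (hf : ∀ B ∈ 𝒮, μ B ≠ ∞)
    {M : Set α} (hMm : MeasurableSet M) (hM : μ M ≠ ∞) {c : ℝ}
    (h : ∀ B ∈ 𝒮, c * μ.real B ≤ μ.real (M ∩ B)) :
    c * μ.real (⋃₀ 𝒮) ≤ μ.real (M ∩ ⋃₀ 𝒮) := by
  lift 𝒮 to Finset (Set α) using h𝒮
  rw [sUnion_eq_biUnion, inter_iUnion₂, Finset.set_biUnion_coe, Finset.set_biUnion_coe,
    measureReal_biUnion_finset (f := fun B => B) hd hm hf,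
    measureReal_biUnion_finset (f := fun B => M ∩ B) (hd.mono fun _ => inter_subset_right)
      (fun B hB => hMm.inter (hm B hB)) (fun _ _ => measure_ne_top_of_subset inter_subset_left hM),
    Finset.mul_sum]
  exact Finset.sum_le_sum h

namespace JonesConds

variable {n : ℕ} {𝒩 : Set (Set ℝ)} {ℬ : ℕ → ℕ → Set (Set ℝ)} {κ : ℝ} {k j k' j' : ℕ}
  {S : Set ℝ}

theorem measurableSet (h : JonesConds n 𝒩 ℬ κ) (hS : S ∈ 𝒩) : MeasurableSet S :=
  (h.1.1 S hS).1

theorem volume_pos (h : JonesConds n 𝒩 ℬ κ) (hS : S ∈ 𝒩) : 0 < volume S :=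
  (h.1.1 S hS).2.1

theorem volume_lt_top (h : JonesConds n 𝒩 ℬ κ) (hS : S ∈ 𝒩) : volume S < ∞ :=
  (h.1.1 S hS).2.2

theorem msr_pos (h : JonesConds n 𝒩 ℬ κ) (hS : S ∈ 𝒩) : 0 < msr S :=
  ENNReal.toReal_pos (h.volume_pos hS).ne' (h.volume_lt_top hS).ne

theorem nested (h : JonesConds n 𝒩 ℬ κ) {T : Set ℝ} (hS : S ∈ 𝒩) (hT : T ∈ 𝒩)
    (hST : (S ∩ T).Nonempty) : S ⊆ T ∨ T ⊆ S :=
  h.1.2.1 S hS T hT hST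

theorem finite (h : JonesConds n 𝒩 ℬ κ) (hk : k ≤ n) (hj : j < 2 ^ k) : (ℬ k j).Finite :=
  (h.1.2.2 k j hk hj).1

theorem subset (h : JonesConds n 𝒩 ℬ κ) (hk : k ≤ n) (hj : j < 2 ^ k) : ℬ k j ⊆ 𝒩 :=
  (h.1.2.2 k j hk hj).2

theorem nonempty (h : JonesConds n 𝒩 ℬ κ) (hk : k ≤ n) (hj : j < 2 ^ k) : (ℬ k j).Nonempty :=
  (h.2.1.1 k j hk hj).1

theorem pairwiseDisjoint (h : JonesConds n 𝒩 ℬ κ) (hk : k ≤ n) (hj : j < 2 ^ k) :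
    (ℬ k j).PairwiseDisjoint id := fun S hS T hT hne =>
  disjoint_iff_inter_eq_empty.2 ((h.2.1.1 k j hk hj).2 S hS T hT hne)

theorem inter_eq_empty (h : JonesConds n 𝒩 ℬ κ) (hk : k ≤ n) (hj : j < 2 ^ k)
    (hk' : k' ≤ n) (hj' : j' < 2 ^ k') (hne : (k, j) ≠ (k', j')) : ℬ k j ∩ ℬ k' j' = ∅ :=
  h.2.1.2 k j k' j' hk hj hk' hj' hne

theorem sUnion_inter_eq_empty (h : JonesConds n 𝒩 ℬ κ) (hk : k ≤ n) (hj : j < 2 ^ k)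
    (hk' : k' ≤ n) (hj' : j' < 2 ^ k') (hd : dyadicSet k j ∩ dyadicSet k' j' = ∅) :
    ⋃₀ ℬ k j ∩ ⋃₀ ℬ k' j' = ∅ :=
  h.2.2.1.1 k j k' j' hk hj hk' hj' hd

theorem sUnion_mono (h : JonesConds n 𝒩 ℬ κ) (hk : k ≤ n) (hj : j < 2 ^ k)
    (hk' : k' ≤ n) (hj' : j' < 2 ^ k') (hsub : dyadicSet k j ⊆ dyadicSet k' j') :
    ⋃₀ ℬ k j ⊆ ⋃₀ ℬ k' j' :=
  h.2.2.1.2 k j k' j' hk hj hk' hj' hsub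

theorem ratio_le (h : JonesConds n 𝒩 ℬ κ) (hk : k ≤ n) (hj : j < 2 ^ k)
    (hk' : k' ≤ n) (hj' : j' < 2 ^ k') (hsub : dyadicSet k j ⊆ dyadicSet k' j')
    (hS : S ∈ ℬ k' j') :
    κ⁻¹ * msr (⋃₀ ℬ k j) / msr (⋃₀ ℬ k' j') ≤ msr (S ∩ ⋃₀ ℬ k j) / msr S :=
  h.2.2.2 k j k' j' hk hj hk' hj' hsub S hS

theorem sUnion_nonempty (h : JonesConds n 𝒩 ℬ κ) (hk : k ≤ n) (hj : j < 2 ^ k) :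
    (⋃₀ ℬ k j).Nonempty := by
  obtain ⟨S, hS⟩ := h.nonempty hk hj
  obtain ⟨x, hx⟩ := nonempty_of_measure_ne_zero (h.volume_pos (h.subset hk hj hS)).ne'
  exact ⟨x, S, hS, hx⟩

theorem not_sUnion_subset_of_disjoint (h : JonesConds n 𝒩 ℬ κ) (hk : k ≤ n) (hj : j < 2 ^ k)
    (hk' : k' ≤ n) (hj' : j' < 2 ^ k') (hd : dyadicSet k j ∩ dyadicSet k' j' = ∅) :
    ¬ ⋃₀ ℬ k j ⊆ ⋃₀ ℬ k' j' := fun hsub => by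
  obtain ⟨x, hx⟩ := h.sUnion_nonempty hk hj
  exact (h.sUnion_inter_eq_empty hk hj hk' hj' hd).subset ⟨hx, hsub hx⟩

theorem dyadicSet_subset_of_sUnion_subset (h : JonesConds n 𝒩 ℬ κ) (hk : k ≤ n)
    (hj : j < 2 ^ k) (hk' : k' ≤ n) (hj' : j' < 2 ^ k') (hsub : ⋃₀ ℬ k j ⊆ ⋃₀ ℬ k' j') :
    k' ≤ k ∧ dyadicSet k j ⊆ dyadicSet k' j' := by
  have hmeet : (dyadicSet k' j' ∩ dyadicSet k j).Nonempty := by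
    rw [nonempty_iff_ne_empty, inter_comm]
    exact fun hd => h.not_sUnion_subset_of_disjoint hk hj hk' hj' hd hsub
  have hk'k : k' ≤ k := by
    by_contra! hlt
    obtain ⟨j'', hj'', hne, hsub''⟩ := exists_ne_dyadicSet_subset hlt hj j'
    have hd : dyadicSet k' j'' ∩ dyadicSet k' j' = ∅ :=
      eq_empty_iff_forall_notMem.2 fun x hx => hne (eq_of_mem_dyadicSet hx.1 hx.2)
    exact h.not_sUnion_subset_of_disjoint hk' hj'' hk' hj' hd
      ((h.sUnion_mono hk' hj'' hk hj hsub'').trans hsub)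
  exact ⟨hk'k, dyadicSet_subset_of_inter_nonempty hk'k hmeet⟩

theorem eq_of_sUnion_eq (h : JonesConds n 𝒩 ℬ κ) (hk : k ≤ n) (hj : j < 2 ^ k)
    (hk' : k' ≤ n) (hj' : j' < 2 ^ k') (heq : ⋃₀ ℬ k j = ⋃₀ ℬ k' j') : k = k' ∧ j = j' := by
  obtain ⟨hk'k, hsub⟩ := h.dyadicSet_subset_of_sUnion_subset hk hj hk' hj' heq.subset
  obtain ⟨hkk', -⟩ := h.dyadicSet_subset_of_sUnion_subset hk' hj' hk hj heq.symm.subset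
  obtain rfl := le_antisymm hk'k hkk'
  exact ⟨rfl, eq_of_mem_dyadicSet (left_mem_dyadicSet k' j) (hsub (left_mem_dyadicSet k' j))⟩

end JonesConds

/-- The collection `𝒩 = {A_I : I ∈ 𝒟^N}` with `A_I = ⋃𝒜_I`. -/
def unionFamily (N : ℕ) (𝒜 : ℕ → ℕ → Set (Set ℝ)) : Set (Set ℝ) :=
  {S | ∃ k j, k ≤ N ∧ j < 2 ^ k ∧ S = ⋃₀ 𝒜 k j}

/-- The reiterated family `𝒞_J = ⋃_{A_I ∈ ℬ_J} 𝒜_I`. -/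
def reiterate (N : ℕ) (𝒜 ℬ : ℕ → ℕ → Set (Set ℝ)) (k j : ℕ) : Set (Set ℝ) :=
  {M | ∃ k' j', k' ≤ N ∧ j' < 2 ^ k' ∧ ⋃₀ 𝒜 k' j' ∈ ℬ k j ∧ M ∈ 𝒜 k' j'}

section Reiteration

variable {n N : ℕ} {κ κ' : ℝ} {𝓜 : Set (Set ℝ)} {𝒜 ℬ : ℕ → ℕ → Set (Set ℝ)} {k j k' j' : ℕ}

theorem sUnion_reiterate (hB : JonesConds n (unionFamily N 𝒜) ℬ κ') (hk : k ≤ n)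
    (hj : j < 2 ^ k) : ⋃₀ reiterate N 𝒜 ℬ k j = ⋃₀ ℬ k j := by
  ext x
  constructor
  · rintro ⟨M, ⟨k', j', -, -, hAB, hM⟩, hx⟩
    exact ⟨_, hAB, M, hM, hx⟩
  · rintro ⟨B, hB', hx⟩
    obtain ⟨k', j', hk', hj', rfl⟩ := hB.subset hk hj hB'
    obtain ⟨M, hM, hx⟩ := hx
    exact ⟨M, ⟨k', j', hk', hj', hB', hM⟩, hx⟩

theorem reiterate_finite (hA : JonesConds N 𝓜 𝒜 κ) : (reiterate N 𝒜 ℬ k j).Finite := by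
  refine ((finite_Iic N).biUnion fun k' hk' =>
    (finite_Iio (2 ^ k')).biUnion fun j' hj' => hA.finite hk' hj').subset ?_
  rintro M ⟨k', j', hk', hj', -, hM⟩
  exact mem_biUnion hk' (mem_biUnion hj' hM)

theorem reiterate_subset (hA : JonesConds N 𝓜 𝒜 κ) : reiterate N 𝒜 ℬ k j ⊆ 𝓜 := by
  rintro M ⟨k', j', hk', hj', -, hM⟩
  exact hA.subset hk' hj' hM

theorem reiterate_nonempty (hA : JonesConds N 𝓜 𝒜 κ)
    (hB : JonesConds n (unionFamily N 𝒜) ℬ κ') (hk : k ≤ n) (hj : j < 2 ^ k) :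
    (reiterate N 𝒜 ℬ k j).Nonempty := by
  obtain ⟨B, hB'⟩ := hB.nonempty hk hj
  obtain ⟨k', j', hk', hj', rfl⟩ := hB.subset hk hj hB'
  obtain ⟨M, hM⟩ := hA.nonempty hk' hj'
  exact ⟨M, k', j', hk', hj', hB', hM⟩

theorem reiterate_pairwise (hA : JonesConds N 𝓜 𝒜 κ)
    (hB : JonesConds n (unionFamily N 𝒜) ℬ κ') (hk : k ≤ n) (hj : j < 2 ^ k) :
    ∀ M ∈ reiterate N 𝒜 ℬ k j, ∀ M' ∈ reiterate N 𝒜 ℬ k j, M ≠ M' → M ∩ M' = ∅ := by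
  rintro M ⟨k₁, j₁, hk₁, hj₁, hB₁, hM⟩ M' ⟨k₂, j₂, hk₂, hj₂, hB₂, hM'⟩ hne
  by_cases hI : k₁ = k₂ ∧ j₁ = j₂
  · obtain ⟨rfl, rfl⟩ := hI
    exact disjoint_iff_inter_eq_empty.1 (hA.pairwiseDisjoint hk₁ hj₁ hM hM' hne)
  · have hA₁₂ : ⋃₀ 𝒜 k₁ j₁ ≠ ⋃₀ 𝒜 k₂ j₂ := fun heq => hI (hA.eq_of_sUnion_eq hk₁ hj₁ hk₂ hj₂ heq)
    exact disjoint_iff_inter_eq_empty.1 <| (hB.pairwiseDisjoint hk hj hB₁ hB₂ hA₁₂).mono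
      (subset_sUnion_of_mem hM) (subset_sUnion_of_mem hM')

theorem reiterate_inter_eq_empty (hA : JonesConds N 𝓜 𝒜 κ)
    (hB : JonesConds n (unionFamily N 𝒜) ℬ κ') (hk : k ≤ n) (hj : j < 2 ^ k)
    (hk' : k' ≤ n) (hj' : j' < 2 ^ k') (hne : (k, j) ≠ (k', j')) :
    reiterate N 𝒜 ℬ k j ∩ reiterate N 𝒜 ℬ k' j' = ∅ := by
  refine eq_empty_iff_forall_notMem.2 ?_
  rintro M ⟨⟨k₁, j₁, hk₁, hj₁, hB₁, hM₁⟩, ⟨k₂, j₂, hk₂, hj₂, hB₂, hM₂⟩⟩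
  by_cases hI : (k₁, j₁) = (k₂, j₂)
  · obtain ⟨rfl, rfl⟩ := Prod.mk.inj hI
    exact (hB.inter_eq_empty hk hj hk' hj' hne).subset ⟨hB₁, hB₂⟩
  · exact (hA.inter_eq_empty hk₁ hj₁ hk₂ hj₂ hI).subset ⟨hM₁, hM₂⟩

theorem inv_mul_ratio_le_ratio_of_mem (hκ : 1 ≤ κ) (hA : JonesConds N 𝓜 𝒜 κ)
    (hB : JonesConds n (unionFamily N 𝒜) ℬ κ') (hk : k ≤ n) (hj : j < 2 ^ k)
    (hk' : k' ≤ N) (hj' : j' < 2 ^ k') {M : Set ℝ} (hM : M ∈ 𝒜 k' j') :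
    κ⁻¹ * msr (⋃₀ 𝒜 k' j' ∩ ⋃₀ ℬ k j) / msr (⋃₀ 𝒜 k' j') ≤ msr (M ∩ ⋃₀ ℬ k j) / msr M := by
  set A := ⋃₀ 𝒜 k' j'
  set X := ⋃₀ ℬ k j
  have hM𝓜 : M ∈ 𝓜 := hA.subset hk' hj' hM
  have hMA : M ⊆ A := subset_sUnion_of_mem hM
  have hA𝒩 : A ∈ unionFamily N 𝒜 := ⟨k', j', hk', hj', rfl⟩
  rw [le_div_iff₀ (hA.msr_pos hM𝓜)]
  by_cases hcov : ∃ B ∈ ℬ k j, A ⊆ B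
  · obtain ⟨B, hB', hAB⟩ := hcov
    have hAX : A ⊆ X := hAB.trans (subset_sUnion_of_mem hB')
    rw [inter_eq_left.2 hAX, inter_eq_left.2 (hMA.trans hAX), mul_div_assoc,
      div_self (hB.msr_pos hA𝒩).ne', mul_one]
    exact mul_le_of_le_one_left ENNReal.toReal_nonneg (inv_le_one_of_one_le₀ hκ)
  push Not at hcov
  set 𝒮 := {B ∈ ℬ k j | (A ∩ B).Nonempty}
  have h𝒮ℬ : 𝒮 ⊆ ℬ k j := sep_subset _ _
  have h𝒮A : ∀ B ∈ 𝒮, B ⊆ A := fun B hB' =>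
    (hB.nested hA𝒩 (hB.subset hk hj hB'.1) hB'.2).resolve_left (hcov B hB'.1)
  have hsUnion : ⋃₀ 𝒮 = A ∩ X := by
    ext x
    constructor
    · rintro ⟨B, hB', hx⟩
      exact ⟨h𝒮A B hB' hx, B, hB'.1, hx⟩
    · rintro ⟨hxA, B, hB', hx⟩
      exact ⟨B, ⟨hB', x, hxA, hx⟩, hx⟩
  have hMX : M ∩ (A ∩ X) = M ∩ X := by
    rw [← inter_assoc, inter_eq_left.2 hMA]
  have h𝒮𝒩 : ∀ B ∈ 𝒮, B ∈ unionFamily N 𝒜 := fun B hB' => hB.subset hk hj hB'.1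
  have hbound : ∀ B ∈ 𝒮, κ⁻¹ * msr M / msr A * volume.real B ≤ volume.real (M ∩ B) := by
    intro B hB'
    obtain ⟨k₁, j₁, hk₁, hj₁, rfl⟩ := h𝒮𝒩 B hB'
    have hI := (hA.dyadicSet_subset_of_sUnion_subset hk₁ hj₁ hk' hj' (h𝒮A _ hB')).2
    have hratio := hA.ratio_le hk₁ hj₁ hk' hj' hI hM
    rw [le_div_iff₀ (hA.msr_pos hM𝓜)] at hratio
    calc κ⁻¹ * msr M / msr A * msr (⋃₀ 𝒜 k₁ j₁) = κ⁻¹ * msr (⋃₀ 𝒜 k₁ j₁) / msr A * msr M := by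
          ring
      _ ≤ msr (M ∩ ⋃₀ 𝒜 k₁ j₁) := hratio
  have key := mul_measureReal_sUnion_le ((hB.finite hk hj).subset h𝒮ℬ)
    ((hB.pairwiseDisjoint hk hj).subset h𝒮ℬ) (fun B hB' => hB.measurableSet (h𝒮𝒩 B hB'))
    (fun B hB' => (hB.volume_lt_top (h𝒮𝒩 B hB')).ne) (hA.measurableSet hM𝓜)
    (hA.volume_lt_top hM𝓜).ne hbound
  rw [hsUnion, hMX] at key
  calc κ⁻¹ * msr (A ∩ X) / msr A * msr M = κ⁻¹ * msr M / msr A * msr (A ∩ X) := by ring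
    _ ≤ msr (M ∩ X) := key

theorem reiterate_ratio_le (hκ : 1 ≤ κ) (hA : JonesConds N 𝓜 𝒜 κ)
    (hB : JonesConds n (unionFamily N 𝒜) ℬ κ) (hk : k ≤ n) (hj : j < 2 ^ k)
    (hk' : k' ≤ n) (hj' : j' < 2 ^ k') (hsub : dyadicSet k j ⊆ dyadicSet k' j') {M : Set ℝ}
    (hM : M ∈ reiterate N 𝒜 ℬ k' j') :
    (κ ^ 2)⁻¹ * msr (⋃₀ reiterate N 𝒜 ℬ k j) / msr (⋃₀ reiterate N 𝒜 ℬ k' j') ≤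
      msr (M ∩ ⋃₀ reiterate N 𝒜 ℬ k j) / msr M := by
  obtain ⟨k₂, j₂, hk₂, hj₂, hAB, hM⟩ := hM
  rw [sUnion_reiterate hB hk hj, sUnion_reiterate hB hk' hj']
  have hκ₀ : 0 ≤ κ⁻¹ := inv_nonneg.2 (zero_le_one.trans hκ)
  calc (κ ^ 2)⁻¹ * msr (⋃₀ ℬ k j) / msr (⋃₀ ℬ k' j')
      = κ⁻¹ * (κ⁻¹ * msr (⋃₀ ℬ k j) / msr (⋃₀ ℬ k' j')) := by ring
    _ ≤ κ⁻¹ * (msr (⋃₀ 𝒜 k₂ j₂ ∩ ⋃₀ ℬ k j) / msr (⋃₀ 𝒜 k₂ j₂)) :=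
      mul_le_mul_of_nonneg_left (hB.ratio_le hk hj hk' hj' hsub hAB) hκ₀
    _ ≤ msr (M ∩ ⋃₀ ℬ k j) / msr M := by
      rw [← mul_div_assoc]
      exact inv_mul_ratio_le_ratio_of_mem hκ hA hB hk hj hk₂ hj₂ hM

end Reiteration

/-- Theorem 3.2 (reiteration): if `(𝒜_I : I ∈ 𝒟^N)` satisfies Jones' conditions (J1)–(J4)
with constant `κ` (inside an ambient nested collection `𝓜`), `𝒩 = {A_I : I ∈ 𝒟^N}` with
`A_I = ⋃𝒜_I`, and `(ℬ_J : J ∈ 𝒟ⁿ)` with `ℬ_J ⊆ 𝒩` also satisfies (J1)–(J4) with constant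
`κ`, then the reiterated family `𝒞_J = ⋃_{A_I ∈ ℬ_J} 𝒜_I` satisfies (J1)–(J4) with
constant `κ²`. -/
theorem jones_reiteration (n N : ℕ) (κ : ℝ) (hκ : 1 ≤ κ)
    (𝓜 : Set (Set ℝ)) (𝒜 : ℕ → ℕ → Set (Set ℝ))
    (hA : JonesConds N 𝓜 𝒜 κ)
    (ℬ : ℕ → ℕ → Set (Set ℝ))
    (hB : JonesConds n {S | ∃ k j, k ≤ N ∧ j < 2 ^ k ∧ S = ⋃₀ 𝒜 k j} ℬ κ)
    (𝒞 : ℕ → ℕ → Set (Set ℝ))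
    (h𝒞 : ∀ k j, 𝒞 k j =
      {M | ∃ k' j', k' ≤ N ∧ j' < 2 ^ k' ∧ (⋃₀ 𝒜 k' j') ∈ ℬ k j ∧ M ∈ 𝒜 k' j'}) :
    JonesConds n 𝓜 𝒞 (κ ^ 2) := by
  obtain rfl : 𝒞 = reiterate N 𝒜 ℬ := funext fun k => funext (h𝒞 k)
  refine ⟨⟨hA.1.1, hA.1.2.1, fun k j _ _ => ⟨reiterate_finite hA, reiterate_subset hA⟩⟩,
    ⟨fun k j hk hj => ⟨reiterate_nonempty hA hB hk hj, reiterate_pairwise hA hB hk hj⟩,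
      fun k j k' j' hk hj hk' hj' hne => reiterate_inter_eq_empty hA hB hk hj hk' hj' hne⟩,
    ⟨fun k j k' j' hk hj hk' hj' hd => ?_, fun k j k' j' hk hj hk' hj' hsub => ?_⟩,
    fun k j k' j' hk hj hk' hj' hsub M hM => reiterate_ratio_le hκ hA hB hk hj hk' hj' hsub hM⟩
  · rw [sUnion_reiterate hB hk hj, sUnion_reiterate hB hk' hj']
    exact hB.sUnion_inter_eq_empty hk hj hk' hj' hd
  · rw [sUnion_reiterate hB hk hj, sUnion_reiterate hB hk' hj']
    exact hB.sUnion_mono hk hj hk' hj' hsub
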